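/- arXiv:1808.10803 — 5 statements merged into one kernel-verified Lean document; each statement's English description precedes it below -/
import Mathlib

section
/- Let q, b₁, b₂, m₁, m₂ be positive integers and B, M ≥ 1 real numbers such that B ≤ b₁, b₂ ≤ 2B, M ≤ m₁, m₂ ≤ 2M, gcd(b₁, m₁) = gcd(b₂, m₂) = 1, 4BM ≤ q, and q divides b₁m₂ − b₂m₁. Then b₁ = b₂ and m₁ = m₂. -/
/-- If `B ≤ b₁, b₂ ≤ 2B`, `M ≤ m₁, m₂ ≤ 2M`, the pairs `(bᵢ, mᵢ)` are coprime,
`4BM ≤ q` and `q ∣ b₁m₂ - b₂m₁`, then `b₁ = b₂` and `m₁ = m₂`. -/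
theorem coprime_pairs_eq_of_small_congruence
    (q b₁ b₂ m₁ m₂ : ℕ) (B M : ℝ) (hq : 0 < q)
    (hb₁ : 0 < b₁) (hb₂ : 0 < b₂) (hm₁ : 0 < m₁) (hm₂ : 0 < m₂)
    (hB : 1 ≤ B) (hM : 1 ≤ M)
    (hBb₁ : B ≤ (b₁ : ℝ)) (hb₁B : (b₁ : ℝ) ≤ 2 * B)
    (hBb₂ : B ≤ (b₂ : ℝ)) (hb₂B : (b₂ : ℝ) ≤ 2 * B)
    (hMm₁ : M ≤ (m₁ : ℝ)) (hm₁M : (m₁ : ℝ) ≤ 2 * M)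
    (hMm₂ : M ≤ (m₂ : ℝ)) (hm₂M : (m₂ : ℝ) ≤ 2 * M)
    (hcop₁ : Nat.gcd b₁ m₁ = 1) (hcop₂ : Nat.gcd b₂ m₂ = 1)
    (hBMq : 4 * B * M ≤ (q : ℝ))
    (hdvd : (q : ℤ) ∣ (b₁ : ℤ) * (m₂ : ℤ) - (b₂ : ℤ) * (m₁ : ℤ)) :
    b₁ = b₂ ∧ m₁ = m₂ := by
  have hBpos : (0:ℝ) < B := lt_of_lt_of_le zero_lt_one hB
  have hMpos : (0:ℝ) < M := lt_of_lt_of_le zero_lt_one hM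
  have habs : |((b₁:ℤ) * m₂ - (b₂:ℤ) * m₁ : ℤ)| < (q:ℤ) := by
    have h1 : ((b₁:ℝ) * m₂ - (b₂:ℝ) * m₁) < (q:ℝ) := by nlinarith
    have h2 : -(q:ℝ) < ((b₁:ℝ) * m₂ - (b₂:ℝ) * m₁) := by nlinarith
    rw [abs_lt]
    constructor <;> [exact_mod_cast h2; exact_mod_cast h1]
  have hzero : (b₁:ℤ) * m₂ = (b₂:ℤ) * m₁ := by
    by_contra h
    have hne : (b₁:ℤ) * m₂ - (b₂:ℤ) * m₁ ≠ 0 := sub_ne_zero.mpr h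
    have := Int.le_of_dvd (abs_pos.mpr hne) ((dvd_abs _ _).mpr hdvd)
    omega
  have hnat : b₁ * m₂ = b₂ * m₁ := by exact_mod_cast hzero
  have hc₁ : Nat.Coprime b₁ m₁ := hcop₁
  have hc₂ : Nat.Coprime b₂ m₂ := hcop₂
  have hd₁ : b₁ ∣ b₂ := (Nat.Coprime.dvd_of_dvd_mul_right hc₁) ⟨m₂, hnat.symm ▸ by ring⟩
  have hd₂ : b₂ ∣ b₁ := (Nat.Coprime.dvd_of_dvd_mul_right hc₂) ⟨m₁, hnat ▸ by ring⟩
  have hb : b₁ = b₂ := Nat.dvd_antisymm hd₁ hd₂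
  refine ⟨hb, ?_⟩
  have : b₁ * m₂ = b₁ * m₁ := by rw [hnat, hb]
  exact (Nat.eq_of_mul_eq_mul_left hb₁ this).symm
end

section
/- Let q be an odd prime and let B, M, X be real numbers with 1 ≤ M ≤ B, 2B < q, 2M < q and 1 ≤ X < q. For every ε > 0 there is a constant C(ε) such that the number of quintuples (b₁, b₂, m₁, m₂, s) of integers with B ≤ b₁, b₂ ≤ 2B, M ≤ m₁, m₂ ≤ 2M, 0 < |s| ≤ X, gcd(b₁, m₁) = gcd(b₂, m₂) = 1, and m₁ b₁^{−1} − m₂ b₂^{−1} ≡ s (mod q) (the inverses being taken modulo q) is at most C(ε) q^ε ( M² + X² B² M² / q ). -/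
/-!
Clearing denominators, a quintuple gives an integer `D = m₁b₂ - m₂b₁ - s b₁b₂` divisible by `q`
with `|D| ≤ 12XB²`. If `D = 0`, coprimality forces `b₁ = b₂ = |m₁ - m₂|`, so the quintuple is
determined by `(m₁, m₂)`: there are at most `4M²` of these. Otherwise `D = qk` with
`0 < |k| ≤ 12XB²/q`, and for fixed `(m₁, m₂, s, k)` the identity
`(s b₁ - m₁)(s b₂ + m₂) = -(s k q + m₁ m₂)` turns `(b₁, b₂)` into a factorisation of a nonzero
integer of size at most `q⁶`. The divisor bound `d(n) ≪_δ n^δ` leaves `≪ q^ε` choices for each of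
the `≪ X²B²M²/q` tuples `(m₁, m₂, s, k)`.
-/

open Finset Real

lemma succ_le_mul_rpow_pow {δ : ℝ} (hδ : 0 < δ) {p : ℕ} (hp : 2 ≤ p) (a : ℕ) :
    (a + 1 : ℝ) ≤ (1 + (δ * log 2)⁻¹) * ((p : ℝ) ^ a) ^ δ := by
  set c := δ * log 2 with hc_def
  have hc : 0 < c := mul_pos hδ (log_pos one_lt_two)
  have hexp : 1 + a * c ≤ ((p : ℝ) ^ a) ^ δ := calc
    1 + a * c ≤ exp (a * c) := by linarith [add_one_le_exp (a * c)]
    _ = ((2 : ℝ) ^ a) ^ δ := by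
      rw [← rpow_natCast, ← rpow_mul zero_le_two, rpow_def_of_pos two_pos, hc_def]
      ring_nf
    _ ≤ ((p : ℝ) ^ a) ^ δ := by gcongr; exact_mod_cast hp
  calc (a + 1 : ℝ) ≤ (1 + c⁻¹) * (1 + a * c) := by
        have : (1 + c⁻¹) * (1 + a * c) = a + 1 + (a * c + c⁻¹) := by field_simp; ring
        rw [this]
        linarith [show 0 ≤ a * c + c⁻¹ by positivity]
    _ ≤ (1 + c⁻¹) * ((p : ℝ) ^ a) ^ δ := by gcongr

lemma succ_le_rpow_pow {δ : ℝ} {p : ℕ} (hp : 2 ≤ (p : ℝ) ^ δ) (a : ℕ) :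
    (a + 1 : ℝ) ≤ ((p : ℝ) ^ a) ^ δ := calc
  (a + 1 : ℝ) ≤ 2 ^ a := by exact_mod_cast Nat.lt_two_pow_self
  _ ≤ ((p : ℝ) ^ δ) ^ a := by gcongr
  _ = ((p : ℝ) ^ a) ^ δ := rpow_pow_comm p.cast_nonneg δ a

/-- Only the primes below `T = ⌈2^(1/δ)⌉` can contribute a factor `(a + 1) / p^(aδ)` larger
than `1`, and each contributes at most `1 + 1/(δ log 2)`. -/
theorem exists_card_divisors_le_mul_rpow {δ : ℝ} (hδ : 0 < δ) :
    ∃ C : ℝ, 0 ≤ C ∧ ∀ n : ℕ, n ≠ 0 → (#n.divisors : ℝ) ≤ C * (n : ℝ) ^ δ := by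
  set A := 1 + (δ * log 2)⁻¹
  have hA : 1 ≤ A := le_add_of_nonneg_right (inv_nonneg.2 (mul_pos hδ (log_pos one_lt_two)).le)
  set T := ⌈(2 : ℝ) ^ δ⁻¹⌉₊
  refine ⟨A ^ T, by positivity, fun n hn => ?_⟩
  have hfactor : ∀ p ∈ n.primeFactors, ((n.factorization p + 1 : ℕ) : ℝ) ≤
      (if p < T then A else 1) * ((p : ℝ) ^ n.factorization p) ^ δ := by
    intro p hp
    push_cast
    split_ifs with hpT
    · exact succ_le_mul_rpow_pow hδ (Nat.prime_of_mem_primeFactors hp).two_le _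
    · rw [one_mul]
      refine succ_le_rpow_pow ?_ _
      calc (2 : ℝ) = ((2 : ℝ) ^ δ⁻¹) ^ δ := by
            rw [← rpow_mul zero_le_two, inv_mul_cancel₀ hδ.ne', rpow_one]
        _ ≤ (p : ℝ) ^ δ := by
          gcongr
          exact (Nat.le_ceil _).trans (by exact_mod_cast not_lt.1 hpT)
  have hsmall : ∏ p ∈ n.primeFactors, (if p < T then A else 1) ≤ A ^ T := by
    rw [← prod_filter, prod_const]
    refine pow_le_pow_right₀ hA ((card_le_card fun p hp => ?_).trans (card_range T).le)
    simpa using (mem_filter.1 hp).2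
  have hn' : ∏ p ∈ n.primeFactors, ((p : ℝ) ^ n.factorization p) ^ δ = (n : ℝ) ^ δ := by
    rw [finsetProd_rpow _ _ (fun p _ => by positivity)]
    conv_rhs => rw [Nat.prod_primeFactors_pow_factorization hn]
    push_cast
    rfl
  calc (#n.divisors : ℝ) = ∏ p ∈ n.primeFactors, ((n.factorization p + 1 : ℕ) : ℝ) := by
        rw [Nat.card_divisors hn]
        push_cast
        rfl
    _ ≤ ∏ p ∈ n.primeFactors, (if p < T then A else 1) * ((p : ℝ) ^ n.factorization p) ^ δ :=
        prod_le_prod (fun _ _ => by positivity) hfactor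
    _ ≤ A ^ T * (n : ℝ) ^ δ := by
        rw [prod_mul_distrib, hn']
        gcongr

lemma Int.card_divisors (z : ℤ) : #z.divisors = 2 * #z.natAbs.divisors := by
  rw [Int.divisors, card_disjUnion, card_map, card_map, two_mul]

lemma Int.card_divisorsAntidiag {z : ℤ} (hz : z ≠ 0) : #z.divisorsAntidiag = #z.divisors := by
  rw [← Int.image_fst_divisorsAntidiag, card_image_of_injOn]
  rintro ⟨x, y⟩ hxy ⟨x', y'⟩ hxy' (rfl : x = x')
  rw [mem_coe, Int.mem_divisorsAntidiag] at hxy hxy'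
  have hx : x ≠ 0 := left_ne_zero_of_mul (hxy.1 ▸ hz)
  obtain rfl : y = y' := mul_left_cancel₀ hx (hxy.1.trans hxy'.1.symm)
  rfl

lemma card_divisors_natAbs_le {C δ : ℝ} (hC₀ : 0 ≤ C)
    (hC : ∀ n : ℕ, n ≠ 0 → (#n.divisors : ℝ) ≤ C * (n : ℝ) ^ δ) (hδ : 0 ≤ δ) {z : ℤ} (hz : z ≠ 0)
    {x : ℝ} (hx : |(z : ℝ)| ≤ x) : (#z.natAbs.divisors : ℝ) ≤ C * x ^ δ :=
  calc (#z.natAbs.divisors : ℝ) ≤ C * (z.natAbs : ℝ) ^ δ := hC _ (Int.natAbs_ne_zero.2 hz)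
    _ ≤ C * x ^ δ := by
      gcongr
      rwa [Nat.cast_natAbs, Int.cast_abs]

lemma mem_Icc_floor_erase_zero {R : ℝ} {k : ℤ} :
    k ∈ (Icc (-⌊R⌋) ⌊R⌋).erase 0 ↔ k ≠ 0 ∧ |(k : ℝ)| ≤ R := by
  rw [mem_erase, mem_Icc, abs_le, neg_le, Int.le_floor, Int.le_floor, Int.cast_neg, neg_le]

lemma card_Icc_floor_erase_zero_le {R : ℝ} (hR : 0 ≤ R) :
    (#((Icc (-⌊R⌋) ⌊R⌋).erase 0) : ℝ) ≤ 2 * R := by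
  have h0 : (0 : ℤ) ∈ Icc (-⌊R⌋) ⌊R⌋ := by simpa using Int.floor_nonneg.2 hR
  have hcard : #((Icc (-⌊R⌋) ⌊R⌋).erase 0) = 2 * ⌊R⌋.toNat := by
    rw [card_erase_of_mem h0, Int.card_Icc]
    omega
  rw [hcard, Int.floor_toNat]
  push_cast
  linarith [Nat.floor_le hR]

lemma mul_sub_mul_sub_mul_eq_zero {K : Type*} [Field K] {b₁ b₂ m₁ m₂ s : K} (hb₁ : b₁ ≠ 0)
    (hb₂ : b₂ ≠ 0) (h : m₁ * b₁⁻¹ - m₂ * b₂⁻¹ = s) : m₁ * b₂ - m₂ * b₁ - s * (b₁ * b₂) = 0 := by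
  subst h
  field_simp
  ring

lemma ZMod.natCast_ne_zero_of_pos_of_lt {q b : ℕ} (hb : 0 < b) (hbq : b < q) :
    (b : ZMod q) ≠ 0 := fun h =>
  (Nat.le_of_dvd hb ((ZMod.natCast_eq_zero_iff b q).1 h)).not_gt hbq

lemma mul_mul_add_mul_ne_zero {q μ₁ μ₂ : ℕ} [Fact q.Prime] (hμ₁ : 0 < μ₁) (hμ₁q : μ₁ < q)
    (hμ₂ : 0 < μ₂) (hμ₂q : μ₂ < q) (σ κ : ℤ) : σ * κ * q + μ₁ * μ₂ ≠ 0 := fun h => by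
  have := congrArg (Int.cast : ℤ → ZMod q) h
  push_cast [ZMod.natCast_self] at this
  exact mul_ne_zero (ZMod.natCast_ne_zero_of_pos_of_lt hμ₁ hμ₁q)
    (ZMod.natCast_ne_zero_of_pos_of_lt hμ₂ hμ₂q) (by simpa using this)

def closeFractions (q : ℕ) (B M X : ℝ) : Set (ℕ × ℕ × ℕ × ℕ × ℤ) :=
  {p : ℕ × ℕ × ℕ × ℕ × ℤ |
          B ≤ (p.1 : ℝ) ∧ (p.1 : ℝ) ≤ 2 * B ∧
          B ≤ (p.2.1 : ℝ) ∧ (p.2.1 : ℝ) ≤ 2 * B ∧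
          M ≤ (p.2.2.1 : ℝ) ∧ (p.2.2.1 : ℝ) ≤ 2 * M ∧
          M ≤ (p.2.2.2.1 : ℝ) ∧ (p.2.2.2.1 : ℝ) ≤ 2 * M ∧
          p.2.2.2.2 ≠ 0 ∧ abs ((p.2.2.2.2 : ℤ) : ℝ) ≤ X ∧
          Nat.gcd p.1 p.2.2.1 = 1 ∧ Nat.gcd p.2.1 p.2.2.2.1 = 1 ∧
          (p.2.2.1 : ZMod q) * (p.1 : ZMod q)⁻¹ -
            (p.2.2.2.1 : ZMod q) * (p.2.1 : ZMod q)⁻¹ = (p.2.2.2.2 : ZMod q)}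

/-- `b₁ b₂ (m₁/b₁ - m₂/b₂ - s)`, computed in `ℤ`. -/
def defect : ℕ × ℕ × ℕ × ℕ × ℤ → ℤ
  | (b₁, b₂, m₁, m₂, s) => m₁ * b₂ - m₂ * b₁ - s * (b₁ * b₂)

lemma card_le_two_mul_card_divisors {P : Finset (ℕ × ℕ × ℕ × ℕ × ℤ)} {q μ₁ μ₂ : ℕ} {σ κ : ℤ}
    (hσ : σ ≠ 0) (hN : σ * κ * q + μ₁ * μ₂ ≠ 0)
    (hP : ∀ p ∈ P, p.2.2 = (μ₁, μ₂, σ) ∧ defect p = q * κ) :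
    #P ≤ 2 * #(σ * κ * q + μ₁ * μ₂).natAbs.divisors := by
  rw [← Int.card_divisors, ← Int.divisors_neg, ← Int.card_divisorsAntidiag (neg_ne_zero.2 hN)]
  refine card_le_card_of_injOn (fun p => (σ * p.1 - μ₁, σ * p.2.1 + μ₂)) ?_ ?_
  · rintro ⟨b₁, b₂, p⟩ hp
    obtain ⟨rfl, hdefect⟩ := hP _ hp
    rw [mem_coe, Int.mem_divisorsAntidiag]
    refine ⟨?_, neg_ne_zero.2 hN⟩
    rw [defect] at hdefect
    linear_combination -σ * hdefect
  · rintro ⟨b₁, b₂, p⟩ hp ⟨b₁', b₂', p'⟩ hp' heq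
    simp only [Prod.mk.injEq, sub_left_inj, add_left_inj] at heq
    have h₁ : b₁ = b₁' := by exact_mod_cast mul_left_cancel₀ hσ heq.1
    have h₂ : b₂ = b₂' := by exact_mod_cast mul_left_cancel₀ hσ heq.2
    exact Prod.ext h₁ (Prod.ext h₂ ((hP _ hp).1.trans (hP _ hp').1.symm))

section closeFractions

variable {q : ℕ} {B M X : ℝ} {b₁ b₂ m₁ m₂ : ℕ} {s : ℤ}

lemma intCast_dvd_defect [Fact q.Prime] (hB : 1 ≤ B) (hBq : 2 * B < q)
    (hp : (b₁, b₂, m₁, m₂, s) ∈ closeFractions q B M X) :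
    (q : ℤ) ∣ defect (b₁, b₂, m₁, m₂, s) := by
  obtain ⟨hb₁, hb₁', hb₂, hb₂', -, -, -, -, -, -, -, -, hcong⟩ := hp
  have hne : ∀ b : ℕ, B ≤ b → (b : ℝ) ≤ 2 * B → (b : ZMod q) ≠ 0 := fun b h h' =>
    ZMod.natCast_ne_zero_of_pos_of_lt (by exact_mod_cast one_pos.trans_le (hB.trans h))
      (by exact_mod_cast h'.trans_lt hBq)
  rw [← ZMod.intCast_zmod_eq_zero_iff_dvd, defect]
  push_cast
  exact mul_sub_mul_sub_mul_eq_zero (hne _ hb₁ hb₁') (hne _ hb₂ hb₂') hcong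

lemma eq_abs_sub_of_defect_eq_zero (hM : 1 ≤ M) (hMB : M ≤ B)
    (hp : (b₁, b₂, m₁, m₂, s) ∈ closeFractions q B M X) (h : defect (b₁, b₂, m₁, m₂, s) = 0) :
    b₂ = b₁ ∧ s * b₁ = m₁ - m₂ ∧ (b₁ : ℤ) = |(m₁ : ℤ) - m₂| := by
  obtain ⟨hb₁, -, -, -, hm₁, hm₁', hm₂, hm₂', hs, -, hcop₁, hcop₂, -⟩ := hp
  dsimp only at *
  rw [defect] at h
  have hb₁₂ : (b₁ : ℤ) ∣ b₂ := (Nat.isCoprime_iff_coprime.2 hcop₁).dvd_of_dvd_mul_left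
    ⟨m₂ + s * b₂, by linear_combination h⟩
  have hb₂₁ : (b₂ : ℤ) ∣ b₁ := (Nat.isCoprime_iff_coprime.2 hcop₂).dvd_of_dvd_mul_left
    ⟨m₁ - s * b₁, by linear_combination -h⟩
  obtain rfl : b₁ = b₂ := by
    exact_mod_cast Int.dvd_antisymm (by positivity) (by positivity) hb₁₂ hb₂₁
  have hb : (0 : ℤ) < b₁ := by exact_mod_cast one_pos.trans_le (hM.trans (hMB.trans hb₁))
  have hsb : s * b₁ = m₁ - m₂ := by
    have : (b₁ : ℤ) * (m₁ - m₂ - s * b₁) = 0 := by linear_combination h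
    linarith [(mul_eq_zero.1 this).resolve_left hb.ne']
  have hs1 : |s| = 1 := by
    refine le_antisymm (le_of_mul_le_mul_right ?_ hb) (Int.one_le_abs hs)
    calc |s| * b₁ = |(m₁ : ℤ) - m₂| := by rw [← hsb, abs_mul, abs_of_pos hb]
      _ ≤ 1 * b₁ := by
        have : |(m₁ : ℝ) - m₂| ≤ b₁ := abs_le.2 ⟨by linarith, by linarith⟩
        rw [one_mul]
        exact_mod_cast this
  refine ⟨rfl, hsb, ?_⟩
  rw [← hsb, abs_mul, hs1, one_mul, abs_of_pos hb]

lemma abs_defect_le (hMB : M ≤ B) (hX : 1 ≤ X)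
    (hp : (b₁, b₂, m₁, m₂, s) ∈ closeFractions q B M X) :
    |(defect (b₁, b₂, m₁, m₂, s) : ℝ)| ≤ 12 * X * B ^ 2 := by
  obtain ⟨-, hb₁', -, hb₂', hm₁, hm₁', -, hm₂', -, hsX, -⟩ := hp
  dsimp only at *
  have hM : 0 ≤ M := by linarith [m₁.cast_nonneg (α := ℝ)]
  have hB : 0 ≤ B := hM.trans hMB
  rw [defect]
  push_cast
  calc |(m₁ : ℝ) * b₂ - m₂ * b₁ - s * (b₁ * b₂)|
      ≤ m₁ * b₂ + m₂ * b₁ + |(s : ℝ)| * (b₁ * b₂) := by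
        have h₁ := abs_sub ((m₁ : ℝ) * b₂ - m₂ * b₁) (s * (b₁ * b₂))
        have h₂ := abs_sub ((m₁ : ℝ) * b₂) (m₂ * b₁)
        simp only [abs_mul, Nat.abs_cast] at h₁ h₂
        linarith
    _ ≤ 2 * M * (2 * B) + 2 * M * (2 * B) + X * (2 * B * (2 * B)) := by gcongr
    _ ≤ 12 * X * B ^ 2 := by nlinarith

lemma defect_div_mem_Icc_floor_erase_zero [Fact q.Prime] (hM : 1 ≤ M) (hMB : M ≤ B)
    (hBq : 2 * B < q) (hX : 1 ≤ X) (hp : (b₁, b₂, m₁, m₂, s) ∈ closeFractions q B M X)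
    (h : defect (b₁, b₂, m₁, m₂, s) ≠ 0) :
    defect (b₁, b₂, m₁, m₂, s) / q ∈
      (Icc (-⌊12 * X * B ^ 2 / q⌋) ⌊12 * X * B ^ 2 / q⌋).erase 0 := by
  have hdef := Int.mul_ediv_cancel' (intCast_dvd_defect (hM.trans hMB) hBq hp)
  have habs := abs_defect_le hMB hX hp
  rw [← hdef] at habs
  push_cast at habs
  rw [abs_mul, Nat.abs_cast, mul_comm, ← le_div_iff₀ (by exact_mod_cast (Fact.out : q.Prime).pos)]
    at habs
  exact mem_Icc_floor_erase_zero.2 ⟨fun h₀ => h (by rw [← hdef, h₀, mul_zero]), habs⟩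

lemma abs_mul_mul_add_mul_le_pow_six {μ₁ μ₂ : ℕ} {σ κ : ℤ} (hMB : M ≤ B) (hBq : 2 * B < q)
    (hXq : X < q) (hq : 2 ≤ q) (hσ : |(σ : ℝ)| ≤ X) (hκ : |(κ : ℝ)| ≤ 12 * X * B ^ 2 / q)
    (hμ₁ : (μ₁ : ℝ) ≤ 2 * M) (hμ₂ : (μ₂ : ℝ) ≤ 2 * M) :
    |((σ * κ * q + μ₁ * μ₂ : ℤ) : ℝ)| ≤ (q : ℝ) ^ 6 := by
  have hq' : (2 : ℝ) ≤ q := by exact_mod_cast hq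
  have hX : 0 ≤ X := (abs_nonneg _).trans hσ
  have hM : 0 ≤ M := by linarith [μ₁.cast_nonneg (α := ℝ)]
  have hB : 0 ≤ B := hM.trans hMB
  push_cast
  calc |(σ : ℝ) * κ * q + μ₁ * μ₂| ≤ |(σ : ℝ)| * |(κ : ℝ)| * q + μ₁ * μ₂ := by
        simpa only [abs_mul, Nat.abs_cast] using abs_add_le ((σ : ℝ) * κ * q) (μ₁ * μ₂)
    _ ≤ X * (12 * X * B ^ 2 / q) * q + 2 * M * (2 * M) := by gcongr
    _ = 3 * (X * (2 * B)) ^ 2 + (2 * M) ^ 2 := by field_simp; ring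
    _ ≤ 3 * (q * q) ^ 2 + q ^ 2 := by gcongr; linarith
    _ ≤ (q : ℝ) ^ 6 := by nlinarith [pow_le_pow_left₀ zero_le_two hq' 2]

lemma card_le_of_defect_eq [Fact q.Prime] {C ε : ℝ} (hC₀ : 0 ≤ C)
    (hC : ∀ n : ℕ, n ≠ 0 → (#n.divisors : ℝ) ≤ C * (n : ℝ) ^ (ε / 6)) (hε : 0 ≤ ε)
    (hMB : M ≤ B) (hBq : 2 * B < q) (hXq : X < q) {μ₁ μ₂ : ℕ} {σ κ : ℤ}
    (hμ₁ : 0 < μ₁) (hμ₁M : (μ₁ : ℝ) ≤ 2 * M) (hμ₂ : 0 < μ₂) (hμ₂M : (μ₂ : ℝ) ≤ 2 * M)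
    (hσ : σ ≠ 0) (hσX : |(σ : ℝ)| ≤ X) (hκ : |(κ : ℝ)| ≤ 12 * X * B ^ 2 / q)
    {P : Finset (ℕ × ℕ × ℕ × ℕ × ℤ)} (hP : ∀ p ∈ P, p.2.2 = (μ₁, μ₂, σ) ∧ defect p = q * κ) :
    (#P : ℝ) ≤ 2 * C * q ^ ε := by
  have hN := mul_mul_add_mul_ne_zero hμ₁ (by exact_mod_cast (by linarith : (μ₁ : ℝ) < q))
    hμ₂ (by exact_mod_cast (by linarith : (μ₂ : ℝ) < q)) σ κ
  have hd := card_divisors_natAbs_le hC₀ hC (by positivity) hN (abs_mul_mul_add_mul_le_pow_six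
    hMB hBq hXq (Fact.out : q.Prime).two_le hσX hκ hμ₁M hμ₂M)
  rw [← rpow_natCast, ← rpow_mul (by positivity), Nat.cast_ofNat,
    show (6 : ℝ) * (ε / 6) = ε by ring] at hd
  have := card_le_two_mul_card_divisors hσ hN hP
  calc (#P : ℝ) ≤ 2 * #(σ * κ * q + μ₁ * μ₂).natAbs.divisors := by exact_mod_cast this
    _ ≤ 2 * C * q ^ ε := by linarith

lemma card_filter_defect_eq_zero_le (hM : 1 ≤ M) (hMB : M ≤ B)
    {S : Finset (ℕ × ℕ × ℕ × ℕ × ℤ)} (hS : ∀ p ∈ S, p ∈ closeFractions q B M X) :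
    (#{p ∈ S | defect p = 0} : ℝ) ≤ 4 * M ^ 2 := by
  have hcard : #{p ∈ S | defect p = 0} ≤ #(Icc 1 ⌊2 * M⌋₊ ×ˢ Icc 1 ⌊2 * M⌋₊) := by
    refine card_le_card_of_injOn (fun p => (p.2.2.1, p.2.2.2.1)) ?_ ?_
    · rintro ⟨b₁, b₂, m₁, m₂, s⟩ hp
      obtain ⟨-, -, -, -, hm₁, hm₁', hm₂, hm₂', -⟩ := hS _ (mem_filter.1 hp).1
      dsimp only at *
      simp only [coe_product, Set.mem_prod, coe_Icc, Set.mem_Icc]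
      exact ⟨⟨by exact_mod_cast hM.trans hm₁, Nat.le_floor hm₁'⟩,
        ⟨by exact_mod_cast hM.trans hm₂, Nat.le_floor hm₂'⟩⟩
    · rintro ⟨b₁, b₂, m₁, m₂, s⟩ hp ⟨b₁', b₂', m₁', m₂', s'⟩ hp' heq
      simp only [Prod.mk.injEq] at heq
      obtain ⟨rfl, rfl⟩ := heq
      rw [mem_coe, mem_filter] at hp hp'
      have hb : (b₁ : ℤ) ≠ 0 := by
        obtain ⟨hb₁, -⟩ := hS _ hp.1
        exact_mod_cast (Nat.cast_pos.1 (one_pos.trans_le (hM.trans (hMB.trans hb₁)))).ne'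
      obtain ⟨hb₂, hs, hb₁⟩ := eq_abs_sub_of_defect_eq_zero hM hMB (hS _ hp.1) hp.2
      obtain ⟨hb₂', hs', hb₁'⟩ := eq_abs_sub_of_defect_eq_zero hM hMB (hS _ hp'.1) hp'.2
      obtain rfl : b₁ = b₁' := by exact_mod_cast hb₁.trans hb₁'.symm
      rw [hb₂, hb₂', mul_right_cancel₀ hb (hs.trans hs'.symm)]
  rw [card_product, Nat.card_Icc, Nat.add_sub_cancel] at hcard
  have hfloor : (⌊2 * M⌋₊ : ℝ) ≤ 2 * M := Nat.floor_le (by positivity)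
  calc (#{p ∈ S | defect p = 0} : ℝ) ≤ ⌊2 * M⌋₊ * ⌊2 * M⌋₊ := by exact_mod_cast hcard
    _ ≤ 2 * M * (2 * M) := by gcongr
    _ = 4 * M ^ 2 := by ring

lemma card_filter_defect_ne_zero_le [Fact q.Prime] {C ε : ℝ} (hC₀ : 0 ≤ C)
    (hC : ∀ n : ℕ, n ≠ 0 → (#n.divisors : ℝ) ≤ C * (n : ℝ) ^ (ε / 6)) (hε : 0 ≤ ε)
    (hM : 1 ≤ M) (hMB : M ≤ B) (hBq : 2 * B < q) (hX : 1 ≤ X) (hXq : X < q)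
    {S : Finset (ℕ × ℕ × ℕ × ℕ × ℤ)} (hS : ∀ p ∈ S, p ∈ closeFractions q B M X) :
    (#{p ∈ S | defect p ≠ 0} : ℝ) ≤
      2 * C * q ^ ε * (2 * M * (2 * M * (2 * X)) * (2 * (12 * X * B ^ 2 / q))) := by
  have hdefect : ∀ p ∈ S, q * (defect p / q) = defect p := fun ⟨_, _, _, _, _⟩ hp =>
    Int.mul_ediv_cancel' (intCast_dvd_defect (hM.trans hMB) hBq (hS _ hp))
  have hfloor : (⌊2 * M⌋₊ : ℝ) ≤ 2 * M := Nat.floor_le (by positivity)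
  set R := 12 * X * B ^ 2 / q
  set t := (Icc 1 ⌊2 * M⌋₊ ×ˢ Icc 1 ⌊2 * M⌋₊ ×ˢ (Icc (-⌊X⌋) ⌊X⌋).erase 0) ×ˢ
    (Icc (-⌊R⌋) ⌊R⌋).erase 0
  have hmaps : ∀ p ∈ {p ∈ S | defect p ≠ 0}, (p.2.2, defect p / q) ∈ t := by
    rintro ⟨b₁, b₂, m₁, m₂, s⟩ hp
    rw [mem_filter] at hp
    have hk := defect_div_mem_Icc_floor_erase_zero hM hMB hBq hX (hS _ hp.1) hp.2
    obtain ⟨-, -, -, -, hm₁, hm₁', hm₂, hm₂', hs, hsX, -⟩ := hS _ hp.1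
    dsimp only at *
    simp only [t, mem_product, mem_Icc]
    exact ⟨⟨⟨by exact_mod_cast hM.trans hm₁, Nat.le_floor hm₁'⟩,
      ⟨by exact_mod_cast hM.trans hm₂, Nat.le_floor hm₂'⟩,
      mem_Icc_floor_erase_zero.2 ⟨hs, hsX⟩⟩, hk⟩
  have hfiber : ∀ y ∈ t,
      #{p ∈ {p ∈ S | defect p ≠ 0} | (p.2.2, defect p / q) = y} ≤ ⌊2 * C * q ^ ε⌋₊ := by
    rintro ⟨⟨μ₁, μ₂, σ⟩, κ⟩ hy
    simp only [t, mem_product, mem_Icc_floor_erase_zero, mem_Icc] at hy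
    obtain ⟨⟨⟨hμ₁, hμ₁'⟩, ⟨hμ₂, hμ₂'⟩, hσ, hσX⟩, -, hκR⟩ := hy
    refine Nat.le_floor (card_le_of_defect_eq hC₀ hC hε hMB hBq hXq hμ₁
      ((Nat.cast_le.2 hμ₁').trans hfloor) hμ₂ ((Nat.cast_le.2 hμ₂').trans hfloor) hσ hσX hκR
      fun p hp => ?_)
    simp only [mem_filter, Prod.mk.injEq] at hp
    exact ⟨hp.2.1, by rw [← hp.2.2, hdefect _ hp.1.1]⟩
  calc (#{p ∈ S | defect p ≠ 0} : ℝ) ≤ ⌊2 * C * q ^ ε⌋₊ * #t := by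
        exact_mod_cast card_le_mul_card_image_of_maps_to hmaps _ hfiber
    _ ≤ 2 * C * q ^ ε * (2 * M * (2 * M * (2 * X)) * (2 * R)) := by
        gcongr
        · exact Nat.floor_le (by positivity)
        · rw [card_product, card_product, card_product, Nat.card_Icc, Nat.add_sub_cancel]
          push_cast
          gcongr
          · exact card_Icc_floor_erase_zero_le (by positivity)
          · exact card_Icc_floor_erase_zero_le (by positivity)

theorem ncard_closeFractions_le [Fact q.Prime] {C ε : ℝ} (hC₀ : 0 ≤ C)
    (hC : ∀ n : ℕ, n ≠ 0 → (#n.divisors : ℝ) ≤ C * (n : ℝ) ^ (ε / 6)) (hε : 0 ≤ ε)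
    (hM : 1 ≤ M) (hMB : M ≤ B) (hBq : 2 * B < q) (hX : 1 ≤ X) (hXq : X < q) :
    ((closeFractions q B M X).ncard : ℝ) ≤
      (4 + 384 * C) * q ^ ε * (M ^ 2 + X ^ 2 * B ^ 2 * M ^ 2 / q) := by
  have hqε : 1 ≤ (q : ℝ) ^ ε :=
    one_le_rpow (by exact_mod_cast (Fact.out : q.Prime).one_lt.le) hε
  rcases (closeFractions q B M X).finite_or_infinite with hfin | hinf
  · have hS : ∀ p ∈ hfin.toFinset, p ∈ closeFractions q B M X :=
      fun _ => (Set.Finite.mem_toFinset hfin).1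
    have h₀ := card_filter_defect_eq_zero_le hM hMB hS
    have h₁ := card_filter_defect_ne_zero_le hC₀ hC hε hM hMB hBq hX hXq hS
    rw [Set.ncard_eq_toFinset_card _ hfin, ← card_filter_add_card_filter_not (defect · = 0)]
    have hY : 0 ≤ X ^ 2 * B ^ 2 * M ^ 2 / q := by positivity
    have : 2 * C * q ^ ε * (2 * M * (2 * M * (2 * X)) * (2 * (12 * X * B ^ 2 / q))) =
        384 * C * q ^ ε * (X ^ 2 * B ^ 2 * M ^ 2 / q) := by ring
    push_cast
    nlinarith [mul_le_mul_of_nonneg_right hqε (sq_nonneg M), mul_nonneg hC₀ (sq_nonneg M),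
      mul_nonneg (zero_le_one.trans hqε) hY]
  · rw [hinf.ncard, Nat.cast_zero]
    positivity

end closeFractions

/-- **Counting bad pairs.** The number of quintuples `(b₁, b₂, m₁, m₂, s)` with
`B ≤ bᵢ ≤ 2B`, `M ≤ mᵢ ≤ 2M`, `0 < |s| ≤ X`, `gcd(bᵢ, mᵢ) = 1` and
`m₁/b₁ - m₂/b₂ ≡ s (mod q)` is `≪_ε q^ε (M² + X²B²M²/q)`. -/
theorem count_close_fractions :
    ∀ ε > (0 : ℝ), ∃ C : ℝ, ∀ (q : ℕ) (hq : q.Prime) (hodd : Odd q), ∀ B M X : ℝ,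
      1 ≤ M → M ≤ B → 2 * B < q → 2 * M < q → 1 ≤ X → X < q →
      ({p : ℕ × ℕ × ℕ × ℕ × ℤ |
          B ≤ (p.1 : ℝ) ∧ (p.1 : ℝ) ≤ 2 * B ∧
          B ≤ (p.2.1 : ℝ) ∧ (p.2.1 : ℝ) ≤ 2 * B ∧
          M ≤ (p.2.2.1 : ℝ) ∧ (p.2.2.1 : ℝ) ≤ 2 * M ∧
          M ≤ (p.2.2.2.1 : ℝ) ∧ (p.2.2.2.1 : ℝ) ≤ 2 * M ∧
          p.2.2.2.2 ≠ 0 ∧ abs ((p.2.2.2.2 : ℤ) : ℝ) ≤ X ∧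
          Nat.gcd p.1 p.2.2.1 = 1 ∧ Nat.gcd p.2.1 p.2.2.2.1 = 1 ∧
          (p.2.2.1 : ZMod q) * (p.1 : ZMod q)⁻¹ -
            (p.2.2.2.1 : ZMod q) * (p.2.1 : ZMod q)⁻¹ = (p.2.2.2.2 : ZMod q)}.ncard : ℝ)
        ≤ C * (q : ℝ) ^ ε * (M ^ 2 + X ^ 2 * B ^ 2 * M ^ 2 / q) := by
  intro ε hε
  obtain ⟨C, hC₀, hC⟩ := exists_card_divisors_le_mul_rpow (div_pos hε (by norm_num : (0 : ℝ) < 6))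
  refine ⟨4 + 384 * C, fun q hq _ B M X hM hMB hBq _ hX hXq => ?_⟩
  have := Fact.mk hq
  exact ncard_closeFractions_le hC₀ hC hε.le hM hMB hBq hX hXq
end

section
/- Let F : ℝ → ℂ be three times continuously differentiable with compact support, and define G(u) = ∫_u^∞ F(v) dv for u ≥ 0, and F̂(z) = ∫_ℝ F(u) e^{2πizu} du for z ∈ ℂ (an entire function). Let q ≥ 1, let χ be a Dirichlet character modulo q with L(s,χ) its Dirichlet L-function, let x > 1, s ∈ ℂ, and c > max{1 − Re s, 0}. Then ∑_{n ≥ 1} χ(n) n^{−s} G(log n / log x) = (1/2πi) ∫_{Re w = c} L(s+w, χ) F̂(−iw log x / (2π)) dw/w, where the sum on the left has only finitely many nonzero terms and the contour integral along the vertical line Re w = c converges absolutely. -/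
open Complex
open scoped Real

noncomputable section

/-! Write `λ = log x` and `w = c + it`. For `Re w > 0`, `e^{-wλy}/w = λ ∫_{r>y} e^{-wλr} dr`;
exchanging this integral with the `t`-integral and applying Fourier inversion to
`H(u) = e^{cλu} F(u)` (whose Fourier transform is integrable because `H` is `C²` with compact
support) gives `(1/2π) ∫ n^{-w} F̂(-iwλ/2π) / w dt = G(log n / λ)` for every `n ≥ 1`. Multiplying
by `χ(n) n^{-s}` and summing over `n`, the sum and the integral may be exchanged because the
Dirichlet series of `χ` converges absolutely on `Re = Re s + c > 1`. Only finitely many terms are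
nonzero since `G` vanishes to the right of the support of `F`. -/

open MeasureTheory Set Filter FourierTransform

section Fourier

variable {E : Type*} [NormedAddCommGroup E] [NormedSpace ℂ E]

theorem HasCompactSupport.iteratedDeriv {f : ℝ → E} (hf : HasCompactSupport f) (n : ℕ) :
    HasCompactSupport (iteratedDeriv n f) := by
  rw [iteratedDeriv_eq_iterate]
  induction n with
  | zero => exact hf
  | succ n ih => rw [Function.iterate_succ_apply']; exact ih.deriv

theorem MeasureTheory.Integrable.continuous_fourier {f : ℝ → E} (hf : Integrable f) :
    Continuous (𝓕 f) :=
  VectorFourier.fourierIntegral_continuous Real.continuous_fourierChar continuous_inner hf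

theorem Real.norm_fourier_le_integral_norm (f : ℝ → E) (ξ : ℝ) : ‖𝓕 f ξ‖ ≤ ∫ v, ‖f v‖ :=
  VectorFourier.norm_fourierIntegral_le_integral_norm _ _ _ _ _

theorem Real.norm_fourier_iteratedDeriv_two {f : ℝ → E} (hf : ContDiff ℝ 2 f)
    (hfs : HasCompactSupport f) (ξ : ℝ) :
    ‖𝓕 (iteratedDeriv 2 f) ξ‖ = (2 * π * ξ) ^ 2 * ‖𝓕 f ξ‖ := by
  have hint (n : ℕ) (hn : (n : ℕ∞) ≤ 2) : Integrable (iteratedDeriv n f) :=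
    (hf.continuous_iteratedDeriv n (mod_cast hn)).integrable_of_hasCompactSupport
      (hfs.iteratedDeriv n)
  rw [Real.fourier_iteratedDeriv (N := 2) (mod_cast hf) hint le_rfl, norm_smul]
  simp [mul_pow, abs_of_pos Real.pi_pos]

theorem Real.integrable_fourier_of_contDiff_two {f : ℝ → E} (hf : ContDiff ℝ 2 f)
    (hfs : HasCompactSupport f) : Integrable (𝓕 f) := by
  set A := ∫ v, ‖f v‖
  set B := ∫ v, ‖iteratedDeriv 2 f v‖
  have hdecay (ξ : ℝ) : ‖𝓕 f ξ‖ ≤ (A + B) * (1 + (2 * π * ξ) ^ 2)⁻¹ := by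
    rw [← div_eq_mul_inv, le_div_iff₀ (by positivity), mul_one_add, mul_comm,
      ← Real.norm_fourier_iteratedDeriv_two hf hfs]
    exact add_le_add (Real.norm_fourier_le_integral_norm f ξ)
      (Real.norm_fourier_le_integral_norm _ ξ)
  refine Integrable.mono' ((integrable_inv_one_add_sq.comp_mul_left' (R := 2 * π)
    (by positivity)).const_mul (A + B)) ?_ (.of_forall hdecay)
  exact (hf.continuous.integrable_of_hasCompactSupport hfs).continuous_fourier.aestronglyMeasurable

theorem Continuous.integral_cexp_smul_fourier [CompleteSpace E] {H : ℝ → E} (hH : Continuous H)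
    (hHi : Integrable H) (hHf : Integrable (𝓕 H)) {lam : ℝ} (hlam : 0 < lam) (r : ℝ) :
    ∫ t : ℝ, cexp (-(lam * t * r * I)) • 𝓕 H (-(lam / (2 * π)) * t) = (2 * π / lam) • H r := by
  have hinv : ∫ ξ : ℝ, cexp (↑(2 * π * ξ * r) * I) • 𝓕 H ξ = H r := by
    conv_rhs => rw [← hH.fourierInv_fourier_eq hHi hHf, Real.fourierInv_eq']
    congr 1 with ξ
    simp only [RCLike.inner_apply, conj_trivial, ofReal_mul]
    ring_nf
  have hscale := Measure.integral_comp_mul_left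
    (fun ξ : ℝ => cexp (↑(2 * π * ξ * r) * I) • 𝓕 H ξ) (-(lam / (2 * π)))
  rw [hinv, abs_inv, abs_neg, abs_of_pos (by positivity), inv_div] at hscale
  rw [← hscale]
  congr 1 with t
  push_cast
  field_simp

end Fourier

theorem integral_Ioi_cexp_neg_mul {w : ℂ} (hw : 0 < w.re) (y : ℝ) :
    ∫ r in Ioi y, cexp (-(w * r)) = cexp (-(w * y)) / w := by
  simpa [neg_mul, neg_div_neg_eq] using integral_exp_mul_complex_Ioi (a := -w) (by simpa) y

theorem MeasureTheory.Integrable.div_ofReal_add_mul_I {Φ : ℝ → ℂ} (hΦ : Integrable Φ) {c : ℝ}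
    (hc : c ≠ 0) : Integrable fun t : ℝ => Φ t / (c + t * I) := by
  have hw (t : ℝ) : (c + t * I : ℂ) ≠ 0 := fun h => hc (by simpa using congrArg Complex.re h)
  simp_rw [div_eq_mul_inv]
  refine hΦ.mul_bdd (c := |c|⁻¹) (Continuous.aestronglyMeasurable ?_) (.of_forall fun t => ?_)
  · exact (by fun_prop : Continuous fun t : ℝ => (c + t * I : ℂ)).inv₀ hw
  · rw [norm_inv]
    exact inv_anti₀ (abs_pos.mpr hc) (by simpa using abs_re_le_norm (c + t * I : ℂ))

theorem Continuous.integral_cexp_mul_fourier_div {H : ℝ → ℂ} (hH : Continuous H)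
    (hHi : Integrable H) (hHf : Integrable (𝓕 H)) {c lam : ℝ} (hc : 0 < c) (hlam : 0 < lam)
    (y : ℝ) :
    ∫ t : ℝ, cexp (-((c + t * I) * lam * y)) * (𝓕 H (-(lam / (2 * π)) * t) / (c + t * I)) =
      2 * π * ∫ r in Ioi y, cexp (-(c * lam * r)) * H r := by
  have hlam0 : (lam : ℂ) ≠ 0 := ofReal_ne_zero.mpr hlam.ne'
  set K : ℝ → ℝ → ℂ := fun t r => cexp (-((c + t * I) * lam * r)) * 𝓕 H (-(lam / (2 * π)) * t)
  have hlaplace (t : ℝ) :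
      cexp (-((c + t * I) * lam * y)) * (𝓕 H (-(lam / (2 * π)) * t) / (c + t * I)) =
        lam * ∫ r in Ioi y, K t r := by
    have hre : 0 < ((c + t * I) * lam).re := by simpa using mul_pos hc hlam
    have hw : (c + t * I : ℂ) ≠ 0 := fun h => hc.ne' (by simpa using congrArg re h)
    rw [integral_mul_const, integral_Ioi_cexp_neg_mul hre]
    field_simp
  have hinner (r : ℝ) : ∫ t, K t r = 2 * π / lam * (cexp (-(c * lam * r)) * H r) := by
    have hsplit (t : ℝ) : K t r =
        cexp (-(c * lam * r)) * (cexp (-(lam * t * r * I)) • 𝓕 H (-(lam / (2 * π)) * t)) := by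
      simp only [K, smul_eq_mul, ← mul_assoc, ← Complex.exp_add]
      congr 2
      ring
    simp_rw [hsplit, integral_const_mul, hH.integral_cexp_smul_fourier hHi hHf hlam r,
      Complex.real_smul]
    push_cast
    ring
  have hK : Integrable (Function.uncurry K) (volume.prod (volume.restrict (Ioi y))) := by
    have hφ : Integrable fun t : ℝ => 𝓕 H (-(lam / (2 * π)) * t) :=
      hHf.comp_mul_left' (by simp [hlam.ne', Real.pi_ne_zero])
    have hψ : IntegrableOn (fun r : ℝ => Real.exp (-(c * lam) * r)) (Ioi y) :=
      integrableOn_exp_mul_Ioi (by nlinarith) y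
    refine (hφ.norm.mul_prod hψ).mono' ?_ (.of_forall fun ⟨t, r⟩ => ?_)
    · have hHf_cont := hHi.continuous_fourier
      exact Continuous.aestronglyMeasurable (by fun_prop)
    · simp only [Function.uncurry_apply_pair, K, norm_mul, Complex.norm_exp]
      rw [mul_comm]
      apply le_of_eq
      congr 2
      simp
  simp_rw [hlaplace, integral_const_mul, integral_integral_swap hK, hinner, integral_const_mul]
  field_simp

section Support

variable {E : Type*} [NormedAddCommGroup E] [NormedSpace ℝ E] {F : ℝ → E}

theorem HasCompactSupport.eventually_integral_Ioi_eq_zero (hFs : HasCompactSupport F) :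
    ∀ᶠ u in atTop, ∫ v in Ioi u, F v = 0 := by
  obtain ⟨R, hR⟩ := hFs.isCompact.bddAbove
  filter_upwards [eventually_ge_atTop R] with u hu
  refine setIntegral_eq_zero_of_forall_eq_zero fun v hv => ?_
  exact image_eq_zero_of_notMem_tsupport fun h => (hu.trans_lt hv).not_ge (hR h)

theorem HasCompactSupport.eventually_integral_Ioi_log_div_eq_zero (hFs : HasCompactSupport F)
    {lam : ℝ} (hlam : 0 < lam) : ∀ᶠ n : ℕ in atTop, ∫ v in Ioi (Real.log n / lam), F v = 0 :=
  ((Real.tendsto_log_atTop.comp tendsto_natCast_atTop_atTop).atTop_div_const hlam).eventually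
    hFs.eventually_integral_Ioi_eq_zero

end Support

section Laplace

variable {F : ℝ → ℂ} {c lam : ℝ}

theorem integral_mul_cexp_eq_fourier (t : ℝ) :
    ∫ u, F u * cexp ((c + t * I) * lam * u) =
      𝓕 (fun u : ℝ => cexp (c * lam * u) * F u) (-(lam / (2 * π)) * t) := by
  rw [Real.fourier_real_eq_integral_exp_smul]
  congr 1 with u
  rw [smul_eq_mul, ← mul_assoc, ← Complex.exp_add, mul_comm]
  congr 2
  push_cast
  field_simp
  ring

theorem ContDiff.cexp_mul_ofReal_mul {n : WithTop ℕ∞} (hF : ContDiff ℝ n F) (a : ℂ) :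
    ContDiff ℝ n fun u : ℝ => cexp (a * u) * F u :=
  (contDiff_const.mul ofRealCLM.contDiff).cexp.mul hF

theorem integrable_fourier_cexp_mul (hF : ContDiff ℝ 2 F) (hFs : HasCompactSupport F) (a : ℂ) :
    Integrable (𝓕 fun u : ℝ => cexp (a * u) * F u) :=
  Real.integrable_fourier_of_contDiff_two (hF.cexp_mul_ofReal_mul a) hFs.mul_left

theorem integrable_integral_mul_cexp_div (hF : ContDiff ℝ 2 F) (hFs : HasCompactSupport F)
    (hc : c ≠ 0) (hlam : lam ≠ 0) :
    Integrable fun t : ℝ => (∫ u, F u * cexp ((c + t * I) * lam * u)) / (c + t * I) := by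
  simp_rw [integral_mul_cexp_eq_fourier]
  exact ((integrable_fourier_cexp_mul hF hFs _).comp_mul_left'
    (by simp [hlam, Real.pi_ne_zero])).div_ofReal_add_mul_I hc

theorem integral_natCast_cpow_mul_integral_mul_cexp_div (hF : ContDiff ℝ 2 F)
    (hFs : HasCompactSupport F) (hc : 0 < c) (hlam : 0 < lam) {n : ℕ} (hn : n ≠ 0) :
    ∫ t : ℝ, (n : ℂ) ^ (-(c + t * I)) *
        ((∫ u, F u * cexp ((c + t * I) * lam * u)) / (c + t * I)) =
      2 * π * ∫ u in Ioi (Real.log n / lam), F u := by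
  have hH := hF.cexp_mul_ofReal_mul (c * lam)
  have hcpow (t : ℝ) :
      (n : ℂ) ^ (-(c + t * I)) = cexp (-((c + t * I) * lam * (Real.log n / lam : ℝ))) := by
    have hlam0 : (lam : ℂ) ≠ 0 := ofReal_ne_zero.mpr hlam.ne'
    rw [cpow_def_of_ne_zero (Nat.cast_ne_zero.mpr hn), ← ofReal_natCast, ← ofReal_log n.cast_nonneg]
    push_cast
    field_simp
  simp_rw [hcpow, integral_mul_cexp_eq_fourier, hH.continuous.integral_cexp_mul_fourier_div
    (hH.continuous.integrable_of_hasCompactSupport hFs.mul_left)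
    (integrable_fourier_cexp_mul hF hFs _) hc hlam, ← mul_assoc, ← Complex.exp_add]
  simp

end Laplace

namespace LSeries

theorem term_add_eq_mul_cpow_neg (f : ℕ → ℂ) (s w : ℂ) (n : ℕ) :
    term f (s + w) n = term f s n * (n : ℂ) ^ (-w) := by
  rcases eq_or_ne n 0 with rfl | hn
  · simp
  · have hn' : (n : ℂ) ≠ 0 := Nat.cast_ne_zero.mpr hn
    rw [term_of_ne_zero hn, term_of_ne_zero hn, cpow_add _ _ hn', cpow_neg]
    field_simp

theorem norm_term_add_mul_I (f : ℕ → ℂ) (s : ℂ) (t : ℝ) (n : ℕ) :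
    ‖term f (s + t * I) n‖ = ‖term f s n‖ := by
  simp [norm_term_eq]

theorem continuous_term_add_mul_I (f : ℕ → ℂ) (s : ℂ) (n : ℕ) :
    Continuous fun t : ℝ => term f (s + t * I) n := by
  rcases eq_or_ne n 0 with rfl | hn
  · simp only [term_zero]
    exact continuous_const
  · simp_rw [term_add_eq_mul_cpow_neg]
    exact continuous_const.mul <| .const_cpow (by fun_prop) (.inl (Nat.cast_ne_zero.mpr hn))

end LSeries

section VerticalLine

open LSeries

variable {f : ℕ → ℂ} {s : ℂ}

theorem LSeriesSummable.continuous_LSeries_add_mul_I (hf : LSeriesSummable f s) :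
    Continuous fun t : ℝ => LSeries f (s + t * I) :=
  continuous_tsum (continuous_term_add_mul_I f s) hf.norm
    fun n t => (norm_term_add_mul_I f s t n).le

theorem LSeriesSummable.norm_LSeries_add_mul_I_le (hf : LSeriesSummable f s) (t : ℝ) :
    ‖LSeries f (s + t * I)‖ ≤ ∑' n, ‖term f s n‖ := by
  simp_rw [LSeries, ← norm_term_add_mul_I f s t]
  exact norm_tsum_le_tsum_norm (hf.norm.congr fun n => (norm_term_add_mul_I f s t n).symm)

theorem LSeriesSummable.integrable_LSeries_add_mul_I_mul (hf : LSeriesSummable f s) {Φ : ℝ → ℂ}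
    (hΦ : Integrable Φ) : Integrable fun t : ℝ => LSeries f (s + t * I) * Φ t :=
  hΦ.bdd_mul hf.continuous_LSeries_add_mul_I.aestronglyMeasurable
    (.of_forall hf.norm_LSeries_add_mul_I_le)

theorem LSeriesSummable.integral_LSeries_add_mul_I_mul {c : ℝ} (hf : LSeriesSummable f (s + c))
    {Φ : ℝ → ℂ} (hΦ : Integrable Φ) :
    ∫ t : ℝ, LSeries f (s + c + t * I) * Φ t =
      ∑' n, term f s n * ∫ t : ℝ, (n : ℂ) ^ (-(c + t * I)) * Φ t := by
  set g : ℕ → ℝ → ℂ := fun n t => term f (s + c + t * I) n * Φ t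
  have hg (n : ℕ) : Integrable (g n) :=
    hΦ.bdd_mul (continuous_term_add_mul_I f _ n).aestronglyMeasurable
      (.of_forall fun t => (norm_term_add_mul_I f _ t n).le)
  have hg_norm (n : ℕ) : ∫ t, ‖g n t‖ = ‖term f (s + c) n‖ * ∫ t, ‖Φ t‖ := by
    simp_rw [g, norm_mul, norm_term_add_mul_I, integral_const_mul]
  calc ∫ t : ℝ, LSeries f (s + c + t * I) * Φ t = ∫ t, ∑' n, g n t := by
        simp_rw [g, LSeries, tsum_mul_right]
    _ = ∑' n, ∫ t, g n t :=
        (integral_tsum_of_summable_integral_norm hg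
          (by simpa [hg_norm] using hf.norm.mul_right _)).symm
    _ = ∑' n, term f s n * ∫ t : ℝ, (n : ℂ) ^ (-(c + t * I)) * Φ t := by
        simp_rw [g, add_assoc s, term_add_eq_mul_cpow_neg, mul_assoc, integral_const_mul]

end VerticalLine

/-- **Lemma (smoothed Perron formula).** For a compactly supported `C³` function `F`,
`G(u) = ∫_u^∞ F`, and a Dirichlet character `χ` mod `q`, the smoothed Dirichlet series
`∑ χ(n) n^{-s} G(log n / log x)` equals a vertical-line integral of `L(s+w,χ)` against
the Fourier transform of `F`. -/
theorem smoothed_series_eq_contour_integral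
    (F : ℝ → ℂ) (hF : ContDiff ℝ 3 F) (hFsupp : HasCompactSupport F)
    (G : ℝ → ℂ) (hG : ∀ u : ℝ, G u = ∫ v in Set.Ioi u, F v)
    (Fhat : ℂ → ℂ)
    (hFhat : ∀ z : ℂ, Fhat z = ∫ u : ℝ, F u * Complex.exp (2 * (π : ℂ) * I * z * u))
    (q : ℕ) (hq : 1 ≤ q) (χ : DirichletCharacter ℂ q)
    (x : ℝ) (hx : 1 < x) (s : ℂ) (c : ℝ) (hc : max (1 - s.re) 0 < c) :
    (Function.support (fun n : ℕ =>
      if 1 ≤ n then χ ((n : ZMod q)) * (n : ℂ) ^ (-s) * G (Real.log n / Real.log x)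
      else 0)).Finite ∧
    MeasureTheory.Integrable (fun t : ℝ =>
      (@DirichletCharacter.LFunction q ⟨by omega⟩ χ (s + c + t * I)) *
        Fhat (-(I * (c + t * I)) * Real.log x / (2 * π)) / (c + t * I)) ∧
    (∑' n : ℕ,
      if 1 ≤ n then χ ((n : ZMod q)) * (n : ℂ) ^ (-s) * G (Real.log n / Real.log x)
      else 0) =
    (1 / (2 * (π : ℂ))) * ∫ t : ℝ,
      (@DirichletCharacter.LFunction q ⟨by omega⟩ χ (s + c + t * I)) *
        Fhat (-(I * (c + t * I)) * Real.log x / (2 * π)) / (c + t * I) := by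
  have : NeZero q := ⟨by omega⟩
  have hc0 : 0 < c := (le_max_right _ _).trans_lt hc
  have hσ : 1 < (s + c).re := by
    simp only [add_re, ofReal_re]
    linarith [(le_max_left (1 - s.re) 0).trans_lt hc]
  have hlam : 0 < Real.log x := Real.log_pos hx
  have hF2 : ContDiff ℝ 2 F := hF.of_le (by norm_num)
  have hΦ := integrable_integral_mul_cexp_div hF2 hFsupp hc0.ne' hlam.ne'
  have hL (t : ℝ) : χ.LFunction (s + c + t * I) *
      Fhat (-(I * (c + t * I)) * Real.log x / (2 * π)) / (c + t * I) =
      LSeries (χ ·) (s + c + t * I) *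
        ((∫ u, F u * cexp ((c + t * I) * Real.log x * u)) / (c + t * I)) := by
    rw [χ.LFunction_eq_LSeries (by simpa using hσ), mul_div_assoc, hFhat]
    congr 3 with u
    congr 2
    field_simp
    linear_combination (-(c + t * I) * Real.log x * u) * I_sq
  have hsum := χ.LSeriesSummable_of_one_lt_re hσ
  refine ⟨?_, ?_, ?_⟩
  · refine Filter.eventually_cofinite.mp ?_
    rw [Nat.cofinite_eq_atTop]
    filter_upwards [hFsupp.eventually_integral_Ioi_log_div_eq_zero hlam] with n hn
    simp [hG, hn]
  · simpa only [hL] using hsum.integrable_LSeries_add_mul_I_mul hΦ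
  · simp_rw [hL]
    rw [hsum.integral_LSeries_add_mul_I_mul hΦ, ← tsum_mul_left]
    refine tsum_congr fun n => ?_
    rcases eq_or_ne n 0 with rfl | hn
    · simp
    rw [if_pos (Nat.one_le_iff_ne_zero.mpr hn),
      integral_natCast_cpow_mul_integral_mul_cexp_div hF2 hFsupp hc0 hlam hn, ← hG,
      LSeries.term_of_ne_zero hn, cpow_neg]
    field_simp
end
end

section
/- There is an absolute constant C such that for every real x ≥ 2, ∑_{a ≤ x} ∑_{b ≤ x} d_{1/2}(a) d_{1/2}(b) / lcm(a, b) ≤ C (log x)^{5/4}. -/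
/-!
Both `d_{1/2}` and `1 / lcm a b` are read off prime by prime from the exponents of `a` and `b`,
so the double sum over `a, b ≤ N` is dominated by the Euler product
`∏_{p ≤ N} ∑_{i,j} c_i c_j p^{-max(i,j)}` with `c_j = C(2j,j)/4^j`. Since `c_0 = 1` and
`c_1 = 1/2`, each factor is `1 + 5/(4p) + O(1/p²)`, so the product is at most
`exp (5/4 ∑_{p ≤ N} 1/p + O(1))`. Mertens' estimate `∑_{p ≤ N} 1/p ≤ log log N + O(1)`,
obtained by partial summation from `∑_{p ≤ N} log p / p ≤ log N + log 4` (Legendre's formula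
for `N!` and Chebyshev's bound `θ(N) ≤ N log 4`), turns this into `(log N)^{5/4}`.
-/

noncomputable section

/-- The multiplicative function `d_{1/2}`, with `d_{1/2}(p^j) = C(2j,j)/4^j`: the Dirichlet
series coefficients of `ζ(s)^{1/2}`. -/
def dHalf (n : ℕ) : ℝ :=
  if n = 0 then 0
  else ∏ p ∈ n.primeFactors,
    (Nat.choose (2 * n.factorization p) (n.factorization p) : ℝ) / 4 ^ (n.factorization p)

open Finset Real
open scoped Nat

theorem Finset.sum_prod_le_prod_sum {α ι κ R : Type*} [CommSemiring R] [PartialOrder R]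
    [IsOrderedRing R] {A : Finset α} {s : Finset ι} {t : Finset κ}
    {w : ι → κ → R} {e : α → ι → κ} (hw : ∀ i ∈ s, ∀ k ∈ t, 0 ≤ w i k)
    (he : ∀ a ∈ A, ∀ i ∈ s, e a i ∈ t)
    (hinj : ∀ a ∈ A, ∀ b ∈ A, (∀ i ∈ s, e a i = e b i) → a = b) :
    ∑ a ∈ A, ∏ i ∈ s, w i (e a i) ≤ ∏ i ∈ s, ∑ k ∈ t, w i k := by
  classical
  set E : α → (∀ i ∈ s, κ) := fun a i _ => e a i
  have hE : Set.InjOn E A := fun a ha b hb hab =>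
    hinj a ha b hb fun i hi => congrFun (congrFun hab i) hi
  have hA : ∑ a ∈ A, ∏ i ∈ s, w i (e a i)
      = ∑ g ∈ A.image E, ∏ i ∈ s.attach, w i (g i i.2) := by
    rw [sum_image hE]
    exact sum_congr rfl fun a _ => (prod_attach s fun i => w i (e a i)).symm
  rw [prod_sum, hA]
  refine sum_le_sum_of_subset_of_nonneg ?_ fun g hg _ => ?_
  · simp only [subset_iff, mem_image, mem_pi]
    rintro _ ⟨a, ha, rfl⟩ i hi
    exact he a ha i hi
  · exact prod_nonneg fun i _ => hw i i.2 _ (mem_pi.mp hg i i.2)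

theorem Nat.factorization_eq_zero_of_notMem_primeFactors {n p : ℕ} (hp : p ∉ n.primeFactors) :
    n.factorization p = 0 := by
  rwa [← Nat.support_factorization, Finsupp.notMem_support_iff] at hp

theorem Nat.prod_pow_factorization_eq_self_of_subset {n : ℕ} (hn : n ≠ 0) {P : Finset ℕ}
    (hP : n.primeFactors ⊆ P) : ∏ p ∈ P, p ^ n.factorization p = n := by
  rw [← Finsupp.prod_of_support_subset _ (Nat.support_factorization n ▸ hP) (· ^ ·)
    fun _ _ => pow_zero _, Nat.prod_factorization_pow_eq_self hn]

theorem Nat.eq_of_factorization_eq_on {a b : ℕ} (ha : a ≠ 0) (hb : b ≠ 0) {P : Finset ℕ}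
    (haP : a.primeFactors ⊆ P) (hbP : b.primeFactors ⊆ P)
    (h : ∀ p ∈ P, a.factorization p = b.factorization p) : a = b := by
  rw [← Nat.prod_pow_factorization_eq_self_of_subset ha haP,
    ← Nat.prod_pow_factorization_eq_self_of_subset hb hbP]
  exact prod_congr rfl fun p hp => by rw [h p hp]

theorem Nat.primeFactors_subset_primesLE {n N : ℕ} (h : n ≤ N) :
    n.primeFactors ⊆ N.primesLE :=
  fun _ hp => Nat.mem_primesLE.mpr
    ⟨(Nat.le_of_mem_primeFactors hp).trans h, Nat.prime_of_mem_primeFactors hp⟩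

def cHalf (j : ℕ) : ℝ := ((2 * j).choose j : ℝ) / 4 ^ j

theorem cHalf_zero : cHalf 0 = 1 := by simp [cHalf]

theorem cHalf_one : cHalf 1 = 1 / 2 := by norm_num [cHalf]

theorem cHalf_nonneg (j : ℕ) : 0 ≤ cHalf j := by unfold cHalf; positivity

theorem cHalf_le_one (j : ℕ) : cHalf j ≤ 1 := by
  rw [cHalf, div_le_one (by positivity), ← Nat.centralBinom_eq_two_mul_choose]
  exact_mod_cast Nat.centralBinom_le_four_pow j

theorem dHalf_eq_prod_cHalf {n : ℕ} (hn : n ≠ 0) {P : Finset ℕ} (hP : n.primeFactors ⊆ P) :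
    dHalf n = ∏ p ∈ P, cHalf (n.factorization p) := by
  rw [dHalf, if_neg hn]
  exact prod_subset hP fun p _ hp => by
    simp [Nat.factorization_eq_zero_of_notMem_primeFactors hp]

theorem Nat.cast_lcm_eq_prod_pow_max {a b : ℕ} (ha : a ≠ 0) (hb : b ≠ 0) {P : Finset ℕ}
    (haP : a.primeFactors ⊆ P) (hbP : b.primeFactors ⊆ P) :
    (a.lcm b : ℝ) = ∏ p ∈ P, (p : ℝ) ^ max (a.factorization p) (b.factorization p) := by
  have hP : (a.lcm b).primeFactors ⊆ P :=
    (Nat.primeFactors_mono (Nat.lcm_dvd_mul a b) (mul_ne_zero ha hb)).trans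
      (Nat.primeFactors_mul ha hb ▸ union_subset haP hbP)
  rw [← Nat.prod_pow_factorization_eq_self_of_subset (Nat.lcm_ne_zero ha hb) hP,
    Nat.factorization_lcm ha hb]
  push_cast
  rfl

theorem dHalf_mul_dHalf_div_lcm_eq_prod {a b : ℕ} (ha : a ≠ 0) (hb : b ≠ 0) {P : Finset ℕ}
    (haP : a.primeFactors ⊆ P) (hbP : b.primeFactors ⊆ P) :
    dHalf a * dHalf b / (a.lcm b : ℝ) = ∏ p ∈ P, cHalf (a.factorization p) *
      cHalf (b.factorization p) * (p : ℝ)⁻¹ ^ max (a.factorization p) (b.factorization p) := by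
  rw [dHalf_eq_prod_cHalf ha haP, dHalf_eq_prod_cHalf hb hbP,
    Nat.cast_lcm_eq_prod_pow_max ha hb haP hbP, ← prod_mul_distrib, ← prod_div_distrib]
  simp only [inv_pow, div_eq_mul_inv]

def eulerFactor (M : ℕ) (q : ℝ) : ℝ :=
  ∑ k ∈ range M ×ˢ range M, cHalf k.1 * cHalf k.2 * q ^ max k.1 k.2

theorem sum_dHalf_div_lcm_le_prod_eulerFactor (N : ℕ) :
    ∑ a ∈ Icc 1 N, ∑ b ∈ Icc 1 N, dHalf a * dHalf b / (a.lcm b : ℝ)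
      ≤ ∏ p ∈ N.primesLE, eulerFactor (N + 1) (p : ℝ)⁻¹ := by
  have hmem : ∀ n ∈ Icc 1 N, n ≠ 0 ∧ n.primeFactors ⊆ N.primesLE := fun n hn =>
    ⟨by grind, Nat.primeFactors_subset_primesLE (mem_Icc.mp hn).2⟩
  rw [← sum_product']
  calc ∑ ab ∈ Icc 1 N ×ˢ Icc 1 N, dHalf ab.1 * dHalf ab.2 / (ab.1.lcm ab.2 : ℝ)
      = ∑ ab ∈ Icc 1 N ×ˢ Icc 1 N, ∏ p ∈ N.primesLE,
          cHalf (ab.1.factorization p) * cHalf (ab.2.factorization p) *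
            (p : ℝ)⁻¹ ^ max (ab.1.factorization p) (ab.2.factorization p) := by
        refine sum_congr rfl fun ab hab => ?_
        rw [mem_product] at hab
        exact dHalf_mul_dHalf_div_lcm_eq_prod (hmem _ hab.1).1 (hmem _ hab.2).1 (hmem _ hab.1).2
          (hmem _ hab.2).2
    _ ≤ ∏ p ∈ N.primesLE, eulerFactor (N + 1) (p : ℝ)⁻¹ := by
        refine sum_prod_le_prod_sum
          (w := fun (p : ℕ) (k : ℕ × ℕ) =>
            cHalf k.1 * cHalf k.2 * (p : ℝ)⁻¹ ^ max k.1 k.2)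
          (e := fun (ab : ℕ × ℕ) (p : ℕ) => (ab.1.factorization p, ab.2.factorization p))
          (fun _ _ _ _ => mul_nonneg (mul_nonneg (cHalf_nonneg _) (cHalf_nonneg _))
            (by positivity)) ?_ ?_
        · intro ab hab p _
          rw [mem_product] at hab
          have ha := Nat.factorization_lt p (hmem _ hab.1).1
          have hb := Nat.factorization_lt p (hmem _ hab.2).1
          simp only [mem_product, mem_range, mem_Icc] at hab ⊢
          omega
        · rintro ⟨a, b⟩ hab ⟨c, d⟩ hcd h
          simp only [mem_product, Prod.mk.injEq] at hab hcd h
          rw [Nat.eq_of_factorization_eq_on (hmem a hab.1).1 (hmem c hcd.1).1 (hmem a hab.1).2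
              (hmem c hcd.1).2 fun p hp => (h p hp).1,
            Nat.eq_of_factorization_eq_on (hmem b hab.2).1 (hmem d hcd.2).1 (hmem b hab.2).2
              (hmem d hcd.2).2 fun p hp => (h p hp).2]

/-- Since `(3/4)^2 ≥ 1/2`, the decay in `max i j` is dominated by a product of geometric
sequences in `i` and `j`. -/
theorem pow_max_le_of_two_le {q : ℝ} (hq0 : 0 ≤ q) (hq : q ≤ 1 / 2) {i j : ℕ}
    (h : 2 ≤ max i j) : q ^ max i j ≤ 4 * q ^ 2 * ((3 / 4) ^ i * (3 / 4) ^ j) := by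
  obtain ⟨k, hk⟩ := Nat.exists_eq_add_of_le h
  calc q ^ max i j = q ^ 2 * q ^ k := by rw [hk, pow_add]
    _ ≤ q ^ 2 * (1 / 2) ^ k := by gcongr
    _ = 4 * q ^ 2 * (1 / 2) ^ max i j := by rw [hk, pow_add]; ring
    _ ≤ 4 * q ^ 2 * ((3 / 4) ^ max i j * (3 / 4) ^ max i j) := by
        rw [← mul_pow]; gcongr; norm_num
    _ ≤ 4 * q ^ 2 * ((3 / 4) ^ i * (3 / 4) ^ j) := by
        have h0 : (0 : ℝ) ≤ 3 / 4 := by norm_num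
        have h1 : (3 / 4 : ℝ) ≤ 1 := by norm_num
        exact mul_le_mul_of_nonneg_left
          (mul_le_mul (pow_le_pow_of_le_one h0 h1 (le_max_left i j))
            (pow_le_pow_of_le_one h0 h1 (le_max_right i j)) (by positivity) (by positivity))
          (by positivity)

theorem eulerFactor_nonneg (M : ℕ) {q : ℝ} (hq : 0 ≤ q) : 0 ≤ eulerFactor M q :=
  sum_nonneg fun _ _ => mul_nonneg (mul_nonneg (cHalf_nonneg _) (cHalf_nonneg _)) (by positivity)

theorem sum_cHalf_mul_pow_max_sdiff_le {M : ℕ} {q : ℝ} (hq0 : 0 ≤ q) (hq : q ≤ 1 / 2) :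
    ∑ k ∈ (range M ×ˢ range M) \ (range 2 ×ˢ range 2),
      cHalf k.1 * cHalf k.2 * q ^ max k.1 k.2 ≤ 64 * q ^ 2 := by
  have hgeom : ∑ i ∈ range M, (3 / 4 : ℝ) ^ i ≤ 4 := by
    have := geom_sum_Ico_le_of_lt_one (x := (3 / 4 : ℝ)) (m := 0) (n := M) (by norm_num)
      (by norm_num)
    norm_num [← range_eq_Ico] at this
    exact this
  calc _ ≤ ∑ k ∈ (range M ×ˢ range M) \ (range 2 ×ˢ range 2),
          4 * q ^ 2 * ((3 / 4) ^ k.1 * (3 / 4) ^ k.2) := by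
        refine sum_le_sum fun k hk => ?_
        have h2 : 2 ≤ max k.1 k.2 := by
          simp only [mem_sdiff, mem_product, mem_range] at hk
          omega
        calc cHalf k.1 * cHalf k.2 * q ^ max k.1 k.2 ≤ 1 * 1 * q ^ max k.1 k.2 := by
              gcongr
              exacts [cHalf_nonneg _, cHalf_le_one _, cHalf_le_one _]
          _ ≤ _ := by rw [one_mul, one_mul]; exact pow_max_le_of_two_le hq0 hq h2
    _ ≤ ∑ k ∈ range M ×ˢ range M, 4 * q ^ 2 * ((3 / 4) ^ k.1 * (3 / 4) ^ k.2) :=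
        sum_le_sum_of_subset_of_nonneg sdiff_subset fun _ _ _ => by positivity
    _ = 4 * q ^ 2 * (∑ i ∈ range M, (3 / 4 : ℝ) ^ i) ^ 2 := by
        rw [← mul_sum, sum_product, sq (∑ i ∈ range M, (3 / 4 : ℝ) ^ i), sum_mul_sum]
    _ ≤ 4 * q ^ 2 * 4 ^ 2 := by gcongr
    _ = 64 * q ^ 2 := by ring

theorem eulerFactor_le {M : ℕ} (hM : 2 ≤ M) {q : ℝ} (hq0 : 0 ≤ q) (hq : q ≤ 1 / 2) :
    eulerFactor M q ≤ 1 + 5 / 4 * q + 64 * q ^ 2 := by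
  have hsub : range 2 ×ˢ range 2 ⊆ range M ×ˢ range M :=
    product_subset_product (range_subset_range.mpr hM) (range_subset_range.mpr hM)
  have hlow : ∑ k ∈ range 2 ×ˢ range 2, cHalf k.1 * cHalf k.2 * q ^ max k.1 k.2
      = 1 + 5 / 4 * q := by
    simp only [sum_product, sum_range_succ, range_one, sum_singleton, cHalf_zero, cHalf_one,
      zero_le, sup_of_le_left, sup_of_le_right, max_self, pow_zero, pow_one]
    ring
  rw [eulerFactor, ← sum_sdiff hsub, hlow]
  linarith [sum_cHalf_mul_pow_max_sdiff_le (M := M) hq0 hq]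

theorem Nat.Prime.div_le_factorization_factorial {p : ℕ} (hp : p.Prime) (n : ℕ) :
    n / p ≤ (n !).factorization p := by
  rw [Nat.factorization_factorial hp (Nat.lt_succ_of_le (Nat.log_le_self p n))]
  rcases n.eq_zero_or_pos with rfl | hn
  · simp
  simpa using single_le_sum (f := fun i => n / p ^ i) (fun _ _ => Nat.zero_le _)
    (mem_Ico.mpr ⟨le_rfl, Nat.succ_lt_succ hn⟩)

theorem sum_primesLE_div_mul_log_le_log_factorial (n : ℕ) :
    ∑ p ∈ n.primesLE, ((n / p : ℕ) : ℝ) * log p ≤ log (n ! : ℕ) := by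
  rw [log_nat_eq_sum_factorization, Finsupp.sum, Nat.support_factorization]
  have hsub : n.primesLE ⊆ (n !).primeFactors := fun p hp =>
    (Nat.prime_of_mem_primesLE hp).mem_primeFactors
      (Nat.dvd_factorial (Nat.prime_of_mem_primesLE hp).pos (Nat.le_of_mem_primesLE hp))
      (Nat.factorial_ne_zero n)
  calc ∑ p ∈ n.primesLE, ((n / p : ℕ) : ℝ) * log p
      ≤ ∑ p ∈ n.primesLE, ((n !).factorization p : ℝ) * log p :=
        sum_le_sum fun p hp => by
          have hp := Nat.prime_of_mem_primesLE hp
          exact mul_le_mul_of_nonneg_right (mod_cast hp.div_le_factorization_factorial n)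
            (log_nonneg (mod_cast hp.one_le))
    _ ≤ _ := sum_le_sum_of_subset_of_nonneg hsub fun p _ _ => by positivity

theorem log_factorial_le (n : ℕ) : log (n ! : ℕ) ≤ n * log n := by
  calc log (n ! : ℕ) ≤ log ((n ^ n : ℕ) : ℝ) :=
        log_le_log (by exact_mod_cast n.factorial_pos) (by exact_mod_cast n.factorial_le_pow)
    _ = n * log n := by rw [Nat.cast_pow, log_pow]

theorem sum_primesLE_log_div_le (n : ℕ) : ∑ p ∈ n.primesLE, log p / p ≤ log n + log 4 := by
  rcases n.eq_zero_or_pos with rfl | hn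
  · simp [Real.log_nonneg]
  have hθ : ∑ p ∈ n.primesLE, log p ≤ log 4 * n := by
    rw [← Chebyshev.theta_eq_sum_primesLE_log]
    exact Chebyshev.theta_le_log4_mul_x n.cast_nonneg
  have hfloor : ∀ p ∈ n.primesLE,
      (n : ℝ) * (log p / p) ≤ ((n / p : ℕ) : ℝ) * log p + log p := by
    intro p hp
    have hlog : 0 ≤ log p := log_nonneg (by exact_mod_cast (Nat.prime_of_mem_primesLE hp).one_le)
    have : (n : ℝ) / p ≤ ((n / p : ℕ) : ℝ) + 1 := by
      rw [← Nat.floor_div_eq_div (K := ℝ)]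
      exact (Nat.lt_floor_add_one _).le
    calc (n : ℝ) * (log p / p) = (n / p) * log p := by ring
      _ ≤ (((n / p : ℕ) : ℝ) + 1) * log p := by gcongr
      _ = _ := by ring
  have hmul : (n : ℝ) * ∑ p ∈ n.primesLE, log p / p ≤ n * (log n + log 4) := calc
    (n : ℝ) * ∑ p ∈ n.primesLE, log p / p
        ≤ ∑ p ∈ n.primesLE, (((n / p : ℕ) : ℝ) * log p + log p) := by
          rw [mul_sum]; exact sum_le_sum hfloor
    _ ≤ log (n ! : ℕ) + log 4 * n := by
          rw [sum_add_distrib]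
          exact add_le_add (sum_primesLE_div_mul_log_le_log_factorial n) hθ
    _ ≤ n * log n + log 4 * n := by grw [log_factorial_le]
    _ = n * (log n + log 4) := by ring
  exact le_of_mul_le_mul_left hmul (by positivity)

theorem log_mul_inv_log_sub_inv_log_le {x y : ℝ} (hx : 1 < x) (hxy : x ≤ y) :
    log x * ((log x)⁻¹ - (log y)⁻¹) ≤ log (log y) - log (log x) := by
  have hlx : 0 < log x := log_pos hx
  have hly : 0 < log y := log_pos (hx.trans_le hxy)
  have h := one_sub_inv_le_log_of_pos (div_pos hly hlx)
  rw [log_div hly.ne' hlx.ne', inv_div] at h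
  calc log x * ((log x)⁻¹ - (log y)⁻¹) = 1 - log x / log y := by field_simp
    _ ≤ _ := h

theorem neg_one_le_log_log_two : -1 ≤ log (log 2) := by
  have h2 : 1 / 2 < log 2 := by linarith [log_two_gt_d9]
  have := one_sub_inv_le_log_of_pos (h2.trans' one_half_pos)
  have : (log 2)⁻¹ ≤ 2 := by rw [inv_le_comm₀ (h2.trans' one_half_pos) two_pos]; linarith
  linarith

theorem sum_primesLE_inv_eq {N : ℕ} (hN : 2 ≤ N) :
    ∑ p ∈ N.primesLE, (p : ℝ)⁻¹ = (log N)⁻¹ * ∑ p ∈ N.primesLE, log p / p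
      + ∑ i ∈ Ico 2 N,
          ((log i)⁻¹ - (log (i + 1))⁻¹) * ∑ p ∈ i.primesLE, log p / p := by
  set a : ℕ → ℝ := fun n => if n.Prime then log n / n else 0
  have ha : ∀ n, ∑ i ∈ range (n + 1), a i = ∑ p ∈ n.primesLE, log p / p := fun n => by
    rw [Nat.primesLE_eq_filter_range, sum_filter]
  have h := sum_Ico_by_parts (fun n : ℕ => (log n)⁻¹) a (show 2 < N + 1 by omega)
  simp only [Nat.add_sub_cancel, ha, smul_eq_mul, Nat.primesLE_one, sum_empty, mul_zero,
    sub_zero] at h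
  have hlhs :
      ∑ p ∈ N.primesLE, (p : ℝ)⁻¹ = ∑ n ∈ Ico 2 (N + 1), (log n)⁻¹ * a n := by
    rw [Nat.primesLE_eq_filter_Icc_two, sum_filter, ← Ico_add_one_right_eq_Icc]
    refine sum_congr rfl fun n _ => ?_
    split_ifs with hp
    · have : log n ≠ 0 := (log_pos (by exact_mod_cast hp.one_lt)).ne'
      simp only [a, if_pos hp]
      field_simp
    · simp [a, hp]
  rw [hlhs, h, sub_eq_add_neg, ← sum_neg_distrib]
  push_cast
  exact congrArg _ (sum_congr rfl fun i _ => by ring)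

theorem inv_log_sub_inv_log_succ_mul_le {i : ℕ} (hi : 2 ≤ i) :
    ((log i)⁻¹ - (log (i + 1))⁻¹) * ∑ p ∈ i.primesLE, log p / p
      ≤ log (log (i + 1)) - log (log i) + log 4 * ((log i)⁻¹ - (log (i + 1))⁻¹) := by
  have hi : (2 : ℝ) ≤ i := by exact_mod_cast hi
  have hmono : 0 ≤ (log i)⁻¹ - (log (i + 1))⁻¹ :=
    sub_nonneg.mpr (inv_anti₀ (log_pos (by linarith)) (log_le_log (by linarith) (by linarith)))
  calc ((log i)⁻¹ - (log (i + 1))⁻¹) * ∑ p ∈ i.primesLE, log p / p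
      ≤ ((log i)⁻¹ - (log (i + 1))⁻¹) * (log i + log 4) := by grw [sum_primesLE_log_div_le]
    _ = log i * ((log i)⁻¹ - (log (i + 1))⁻¹)
          + log 4 * ((log i)⁻¹ - (log (i + 1))⁻¹) := by
        ring
    _ ≤ _ := by grw [log_mul_inv_log_sub_inv_log_le (by linarith) (by linarith)]

theorem sum_primesLE_inv_le {N : ℕ} (hN : 2 ≤ N) :
    ∑ p ∈ N.primesLE, (p : ℝ)⁻¹ ≤ log (log N) + 6 := by
  have hlog2 : 0 < log 2 := log_pos one_lt_two
  have hlog4 : log 4 = 2 * log 2 := by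
    rw [show (4 : ℝ) = 2 ^ 2 by norm_num, log_pow, Nat.cast_ofNat]
  have hlogN : log 2 ≤ log N := log_le_log two_pos (by exact_mod_cast hN)
  have hfirst : (log N)⁻¹ * ∑ p ∈ N.primesLE, log p / p ≤ 3 := calc
    _ ≤ (log N)⁻¹ * (log N + log 4) := by grw [sum_primesLE_log_div_le]
    _ = 1 + log 4 / log N := by
      rw [mul_add, inv_mul_cancel₀ (hlog2.trans_le hlogN).ne', inv_mul_eq_div]
    _ ≤ 1 + log 4 / log 2 := by gcongr
    _ = 3 := by rw [hlog4, mul_div_cancel_right₀ _ hlog2.ne']; norm_num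
  have htel_loglog := sum_Ico_sub (fun n : ℕ => log (log (n : ℝ))) hN
  have htel_inv := sum_Ico_sub (fun n : ℕ => (log (n : ℝ))⁻¹) hN
  push_cast at htel_loglog htel_inv
  have hrest :
      ∑ i ∈ Ico 2 N, ((log i)⁻¹ - (log (i + 1))⁻¹) * ∑ p ∈ i.primesLE, log p / p
      ≤ log (log N) + 3 := calc
    _ ≤ ∑ i ∈ Ico 2 N, (log (log (i + 1)) - log (log i)
          + log 4 * ((log i)⁻¹ - (log (i + 1))⁻¹)) :=
        sum_le_sum fun i hi => inv_log_sub_inv_log_succ_mul_le (mem_Ico.mp hi).1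
    _ = log (log N) - log (log 2) + log 4 * ((log 2)⁻¹ - (log N)⁻¹) := by
        rw [sum_add_distrib, ← mul_sum, htel_loglog, ← neg_sub (log (N : ℝ))⁻¹,
          ← htel_inv, ← sum_neg_distrib]
        simp only [neg_sub]
    _ ≤ log (log N) + 3 := by
        have : log 4 * (log 2)⁻¹ = 2 := by rw [hlog4, mul_inv_cancel_right₀ hlog2.ne']
        have : 0 ≤ log 4 * (log N)⁻¹ := by positivity
        linarith [neg_one_le_log_log_two]
  rw [sum_primesLE_inv_eq hN]
  linarith

theorem sum_primesLE_inv_sq_le_one (N : ℕ) :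
    ∑ p ∈ N.primesLE, ((p : ℝ)⁻¹) ^ 2 ≤ 1 := by
  have hsub : N.primesLE ⊆ Ioo 1 (N + 1) := fun p hp =>
    mem_Ioo.mpr ⟨Nat.one_lt_of_mem_primesLE hp, Nat.lt_succ_of_le (Nat.le_of_mem_primesLE hp)⟩
  calc ∑ p ∈ N.primesLE, ((p : ℝ)⁻¹) ^ 2 = ∑ p ∈ N.primesLE, ((p : ℝ) ^ 2)⁻¹ := by
        simp only [inv_pow]
    _ ≤ ∑ i ∈ Ioo 1 (N + 1), ((i : ℝ) ^ 2)⁻¹ :=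
        sum_le_sum_of_subset_of_nonneg hsub fun _ _ _ => by positivity
    _ ≤ 2 / ((1 : ℕ) + 1) := sum_Ioo_inv_sq_le 1 (N + 1)
    _ = 1 := by norm_num

theorem prod_eulerFactor_le {N : ℕ} (hN : 2 ≤ N) :
    ∏ p ∈ N.primesLE, eulerFactor (N + 1) (p : ℝ)⁻¹
      ≤ exp (5 / 4 * 6 + 64) * log N ^ ((5 : ℝ) / 4) := by
  have hfactor : ∀ p ∈ N.primesLE,
      eulerFactor (N + 1) (p : ℝ)⁻¹
        ≤ 1 + (5 / 4 * (p : ℝ)⁻¹ + 64 * ((p : ℝ)⁻¹) ^ 2) := by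
    intro p hp
    have hp : (2 : ℝ) ≤ p := by exact_mod_cast Nat.two_le_of_mem_primesLE hp
    rw [← add_assoc]
    exact eulerFactor_le (by omega) (by positivity) (by rw [inv_le_comm₀] <;> linarith)
  calc _ ≤ ∏ p ∈ N.primesLE, (1 + (5 / 4 * (p : ℝ)⁻¹ + 64 * ((p : ℝ)⁻¹) ^ 2)) :=
        prod_le_prod (fun _ _ => eulerFactor_nonneg _ (by positivity)) hfactor
    _ ≤ exp (∑ p ∈ N.primesLE, (5 / 4 * (p : ℝ)⁻¹ + 64 * ((p : ℝ)⁻¹) ^ 2)) :=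
        prod_one_add_le_exp_sum _ fun _ => by positivity
    _ = exp (5 / 4 * ∑ p ∈ N.primesLE, (p : ℝ)⁻¹
          + 64 * ∑ p ∈ N.primesLE, ((p : ℝ)⁻¹) ^ 2) := by
        rw [sum_add_distrib, mul_sum, mul_sum]
    _ ≤ exp (5 / 4 * (log (log N) + 6) + 64 * 1) := by
        grw [sum_primesLE_inv_le hN, sum_primesLE_inv_sq_le_one N]
    _ = exp (5 / 4 * 6 + 64) * log N ^ ((5 : ℝ) / 4) := by
        rw [rpow_def_of_pos (log_pos (by exact_mod_cast hN)), ← exp_add]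
        ring_nf

/-- **Euler product bound.** `∑_{a,b ≤ x} d_{1/2}(a) d_{1/2}(b) / [a,b] ≪ (log x)^{5/4}`. -/
theorem sum_dHalf_div_lcm_le :
    ∃ C : ℝ, ∀ x : ℝ, 2 ≤ x →
      ∑ a ∈ Finset.Icc 1 ⌊x⌋₊, ∑ b ∈ Finset.Icc 1 ⌊x⌋₊,
          dHalf a * dHalf b / (Nat.lcm a b : ℝ)
        ≤ C * Real.log x ^ ((5 : ℝ) / 4) := by
  refine ⟨exp (5 / 4 * 6 + 64), fun x hx => ?_⟩
  have hN : 2 ≤ ⌊x⌋₊ := Nat.le_floor (by exact_mod_cast hx)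
  calc _ ≤ ∏ p ∈ (⌊x⌋₊).primesLE, eulerFactor (⌊x⌋₊ + 1) (p : ℝ)⁻¹ :=
        sum_dHalf_div_lcm_le_prod_eulerFactor ⌊x⌋₊
    _ ≤ exp (5 / 4 * 6 + 64) * log ⌊x⌋₊ ^ ((5 : ℝ) / 4) := prod_eulerFactor_le hN
    _ ≤ exp (5 / 4 * 6 + 64) * log x ^ ((5 : ℝ) / 4) := by
        gcongr
        exact Nat.floor_le (by linarith)
end
end

section
/- Let q ≥ 3 be an integer and let 0 < ρ ≤ 1/2. Define W : ℂ → ℂ by W(s) = (q^{ρ(s−1/2)} − 1)/((s − 1/2) log q) for s ≠ 1/2 and W(1/2) = ρ. Then for every z ∈ ℂ with |z| ≤ 1/log q, one has |W(1/2 + z)| ≥ ρ/2. -/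
/-!
Put `w = ρ z log q`. Since `|z| log q ≤ 1` and `ρ ≤ 1/2`, we have `|w| ≤ 1/2`, and the Taylor
bound `|e^w - 1 - w| ≤ |w|²` gives `|e^w - 1| ≥ |w|(1 - |w|) ≥ |w|/2`. Dividing by
`|z| log q = |w|/ρ` yields `|W(1/2 + z)| ≥ ρ/2`.
-/

open Complex

namespace Complex

theorem norm_mul_one_sub_norm_le_norm_exp_sub_one {w : ℂ} (hw : ‖w‖ ≤ 1) :
    ‖w‖ * (1 - ‖w‖) ≤ ‖exp w - 1‖ := by
  have htaylor := norm_exp_sub_one_sub_id_le hw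
  have htri := norm_sub_le (exp w - 1) (exp w - 1 - w)
  rw [sub_sub_cancel] at htri
  nlinarith

theorem half_norm_le_norm_exp_sub_one {w : ℂ} (hw : ‖w‖ ≤ 1 / 2) :
    ‖w‖ / 2 ≤ ‖exp w - 1‖ := by
  have := norm_mul_one_sub_norm_le_norm_exp_sub_one (hw.trans (by norm_num))
  nlinarith [norm_nonneg w]

theorem half_norm_le_norm_exp_mul_sub_one_div {c u : ℂ} (hc : ‖c‖ ≤ 1 / 2) (hu0 : u ≠ 0)
    (hu : ‖u‖ ≤ 1) : ‖c‖ / 2 ≤ ‖(exp (c * u) - 1) / u‖ := by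
  have hcu : ‖c * u‖ ≤ 1 / 2 := by
    rw [norm_mul]
    nlinarith [norm_nonneg c, norm_nonneg u]
  have hu_pos : 0 < ‖u‖ := norm_pos_iff.mpr hu0
  rw [norm_div, le_div_iff₀ hu_pos]
  simpa [norm_mul, mul_div_right_comm] using half_norm_le_norm_exp_sub_one hcu

end Complex

theorem weight_lower_bound_general
    (q : ℕ) (ρ : ℝ) (hρ0 : 0 < ρ) (hρ2 : ρ ≤ 1 / 2)
    (W : ℂ → ℂ)
    (hW : ∀ s : ℂ, s ≠ 1 / 2 →
      W s = (Complex.exp ((ρ : ℂ) * (s - 1 / 2) * Real.log q) - 1) /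
        ((s - 1 / 2) * Real.log q))
    (hWhalf : W (1 / 2) = (ρ : ℂ)) :
    ∀ z : ℂ, ‖z‖ ≤ 1 / Real.log q → ρ / 2 ≤ ‖W (1 / 2 + z)‖ := by
  intro z hz
  rcases eq_or_ne z 0 with rfl | hz0
  · rw [add_zero, hWhalf, norm_real, Real.norm_of_nonneg hρ0.le]
    linarith
  have hlog : 0 ≤ Real.log q := Real.log_natCast_nonneg q
  have hlog0 : Real.log q ≠ 0 := by
    rintro h
    rw [h, div_zero] at hz
    exact hz0 (norm_le_zero_iff.mp hz)
  have hu : ‖z * (Real.log q : ℂ)‖ ≤ 1 := by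
    rw [norm_mul, norm_real, Real.norm_of_nonneg hlog]
    exact mul_le_of_le_div₀ zero_le_one hlog hz
  have hρ : ‖(ρ : ℂ)‖ = ρ := by rw [norm_real, Real.norm_of_nonneg hρ0.le]
  have key := half_norm_le_norm_exp_mul_sub_one_div (hρ.symm ▸ hρ2)
    (mul_ne_zero hz0 (ofReal_ne_zero.mpr hlog0)) hu
  rw [hρ, ← mul_assoc] at key
  rw [hW _ (by simpa using hz0), add_sub_cancel_left]
  exact key

/-- **Lower bound for the weight `W`.** For `W(s) = (q^{ρ(s-1/2)} - 1)/((s-1/2) log q)`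
(with `W(1/2) = ρ`) and `0 < ρ ≤ 1/2`, one has `|W(1/2+z)| ≥ ρ/2` whenever `|z| ≤ 1/log q`. -/
theorem weight_lower_bound
    (q : ℕ) (hq : 3 ≤ q) (ρ : ℝ) (hρ0 : 0 < ρ) (hρ2 : ρ ≤ 1 / 2)
    (W : ℂ → ℂ)
    (hW : ∀ s : ℂ, s ≠ 1 / 2 →
      W s = (Complex.exp ((ρ : ℂ) * (s - 1 / 2) * Real.log q) - 1) /
        ((s - 1 / 2) * Real.log q))
    (hWhalf : W (1 / 2) = (ρ : ℂ)) :
    ∀ z : ℂ, ‖z‖ ≤ 1 / Real.log q → ρ / 2 ≤ ‖W (1 / 2 + z)‖ :=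
  weight_lower_bound_general q ρ hρ0 hρ2 W hW hWhalf
end
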